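/- Under the same local-entropy bounds, for q ≤ 0 and s ≥ qβ − qδ + t one has P^s_{n,ε}(E) ≤ ¯𝒫^{q,t}_{n,ε,ϑ}(E), using ϑ(\bar{B}^{nᵢ}_ε(xᵢ))^q ≥ e^{−q(β−δ)nᵢ}. -/
import Mathlib


open scoped ENNReal
open MeasureTheory

/-- The closed Bowen ball. -/
def closedBowenBall {Y : Type*} [MetricSpace Y] (f : Y → Y) (n : ℕ) (ε : ℝ) (x : Y) : Set Y :=
  {y | ∀ i < n, dist (f^[i] x) (f^[i] y) ≤ ε}

/-- `S` is a centered `(N,ε)`-packing of `A`: countable, pairwise disjoint closed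
Bowen balls with centers in `A` and orders `≥ N`. -/
def IsCenteredPacking {Y : Type*} [MetricSpace Y] (f : Y → Y) (A : Set Y) (N : ℕ) (ε : ℝ)
    (S : Set (Y × ℕ)) : Prop :=
  S.Countable ∧ (∀ p ∈ S, p.1 ∈ A ∧ N ≤ p.2) ∧
    S.Pairwise fun p q =>
      Disjoint (closedBowenBall f p.2 ε p.1) (closedBowenBall f q.2 ε q.1)

/-- `P^s_{n,ε}(E) = sup Σᵢ e^{−s nᵢ}` over centered `(n,ε)`-packings of `E`. -/
noncomputable def packPre {Y : Type*} [MetricSpace Y] (f : Y → Y) (s : ℝ) (n : ℕ) (ε : ℝ)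
    (E : Set Y) : ℝ≥0∞ :=
  ⨆ (S : Set (Y × ℕ)) (_ : IsCenteredPacking f E n ε S),
    ∑' p : S, ENNReal.ofReal (Real.exp (-(s * (p : Y × ℕ).2)))

/-- `¯𝒫^{q,t}_{n,ε,ϑ}(E) = sup Σᵢ ϑ(\bar B^{nᵢ}_ε(xᵢ))^q e^{−t nᵢ}` over centered
`(n,ε)`-packings of `E`. -/
noncomputable def packPreW {Y : Type*} [MetricSpace Y] [MeasurableSpace Y]
    (f : Y → Y) (ϑ : Measure Y) (q t : ℝ) (n : ℕ) (ε : ℝ) (E : Set Y) : ℝ≥0∞ :=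
  ⨆ (S : Set (Y × ℕ)) (_ : IsCenteredPacking f E n ε S),
    ∑' p : S, (ϑ (closedBowenBall f (p : Y × ℕ).2 ε (p : Y × ℕ).1)) ^ q *
      ENNReal.ofReal (Real.exp (-(t * (p : Y × ℕ).2)))


lemma ennreal_rpow_anti {a b : ℝ≥0∞} {q : ℝ} (hab : a ≤ b) (hq : q ≤ 0) : b ^ q ≤ a ^ q := by
  have h1 : a ^ q = (a ^ (-q))⁻¹ := by rw [← ENNReal.rpow_neg, neg_neg]
  have h2 : b ^ q = (b ^ (-q))⁻¹ := by rw [← ENNReal.rpow_neg, neg_neg]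
  rw [h1, h2]
  exact ENNReal.inv_le_inv.mpr (ENNReal.rpow_le_rpow hab (by linarith))

/-- Under the same local-entropy bounds, for `q ≤ 0` and `s ≥ qβ − qδ + t` one has
`P^s_{n,ε}(E) ≤ ¯𝒫^{q,t}_{n,ε,ϑ}(E)`, using `ϑ(\bar B^{nᵢ}_ε(xᵢ))^q ≥ e^{−q(β−δ)nᵢ}`. -/
theorem packPre_le_packPreW_of_nonpos {Y : Type*} [MetricSpace Y] [CompactSpace Y]
    [MeasurableSpace Y] [BorelSpace Y]
    (f : Y → Y) (hf : Continuous f) (ϑ : Measure Y) [IsProbabilityMeasure ϑ]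
    (E : Set Y) (β δ q t s : ℝ) (hβ : 0 ≤ β) (hδ : 0 < δ) (ε : ℝ) (hε : 0 < ε) (N : ℕ)
    (hloc : ∀ x ∈ E, ∀ n : ℕ, N < n →
      ENNReal.ofReal (Real.exp (-((β + δ) * n))) ≤ ϑ (closedBowenBall f n ε x) ∧
      ϑ (closedBowenBall f n ε x) ≤ ENNReal.ofReal (Real.exp (-((β - δ) * n))))
    (hq : q ≤ 0) (hs : q * β - q * δ + t ≤ s) :
    ∀ n : ℕ, N < n → packPre f s n ε E ≤ packPreW f ϑ q t n ε E := by
  intro n hn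
  refine iSup₂_le fun S hS => ?_
  refine le_trans ?_ (le_iSup₂_of_le S hS le_rfl)
  refine ENNReal.tsum_le_tsum fun p => ?_
  obtain ⟨⟨x, m⟩, hp⟩ := p
  obtain ⟨hxE, hnp⟩ := hS.2.1 ⟨x, m⟩ hp
  have hm : N < m := lt_of_lt_of_le hn hnp
  have hub := (hloc x hxE m hm).2
  have hq' : (ENNReal.ofReal (Real.exp (-((β - δ) * m)))) ^ q ≤
      (ϑ (closedBowenBall f m ε x)) ^ q := ennreal_rpow_anti hub hq
  have hpow : (ENNReal.ofReal (Real.exp (-((β - δ) * m)))) ^ q =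
      ENNReal.ofReal (Real.exp (-((β - δ) * m) * q)) := by
    rw [ENNReal.ofReal_rpow_of_pos (Real.exp_pos _), Real.exp_mul]
  calc ENNReal.ofReal (Real.exp (-(s * m)))
      ≤ ENNReal.ofReal (Real.exp (-((β - δ) * m) * q + -(t * m))) := by
        apply ENNReal.ofReal_le_ofReal
        apply Real.exp_le_exp.mpr
        have hm0 : (0 : ℝ) ≤ (m : ℝ) := Nat.cast_nonneg m
        nlinarith
    _ = ENNReal.ofReal (Real.exp (-((β - δ) * m) * q)) *
          ENNReal.ofReal (Real.exp (-(t * m))) := by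
        rw [Real.exp_add, ENNReal.ofReal_mul (Real.exp_pos _).le]
    _ ≤ (ϑ (closedBowenBall f m ε x)) ^ q * ENNReal.ofReal (Real.exp (-(t * m))) := by
        rw [← hpow]; exact mul_le_mul_left hq' _
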